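/- arXiv:1609.09306 — 2 statements merged into one kernel-verified Lean document; each statement's English description precedes it below -/
import Mathlib

section
/- Let Ψ : ℝ⁴ → ℝ⁴ be the diffeomorphism Ψ(x,y,z,t) = (x, y + tx, z + t²x, t). For every p = (p₁,p₂,p₃,p₄) ∈ ℝ⁴ and every v ∈ ℝ⁴, writing w = DΨ_p(v), one has w₂ − p₄·w₁ = v₂ + p₁·v₄ and w₃ − p₄²·w₁ = v₃ + 2p₄p₁·v₄; that is, Ψ*(dy − t dx) = dy + x dt and Ψ*(dz − t² dx) = dz + 2tx dt. Consequently DΨ_p(v) ∈ D_lor(Ψ(p)) if and only if v₂ + p₁·v₄ = 0 and v₃ − 2p₄·v₂ = 0, so Ψ pulls the Lorentzian Engel structure back to the plane field ker(dy + x dt) ∩ ker(dz − 2t dy), a Cartan-prolongation-type model. -/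
/-- The Lorentzian Engel structure on `ℝ⁴` with coordinates
`(x, y, z, t) = (p 0, p 1, p 2, p 3)`:
`D_lor(p) = ker(dy − t dx) ∩ ker(dz − t² dx)`. -/
def Dlor (p : Fin 4 → ℝ) : Set (Fin 4 → ℝ) :=
  {v | v 1 = p 3 * v 0 ∧ v 2 = p 3 ^ 2 * v 0}

/-- The diffeomorphism `Ψ(x,y,z,t) = (x, y + tx, z + t²x, t)`. -/
def Psi (q : Fin 4 → ℝ) : Fin 4 → ℝ :=
  ![q 0, q 1 + q 3 * q 0, q 2 + q 3 ^ 2 * q 0, q 3]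

theorem mem_Dlor_iff (p w : Fin 4 → ℝ) :
    w ∈ Dlor p ↔ w 1 - p 3 * w 0 = 0 ∧ w 2 - p 3 ^ 2 * w 0 = 0 := by
  simp only [Dlor, Set.mem_ofPred_eq, sub_eq_zero]

@[simp]
theorem Psi_apply_three (q : Fin 4 → ℝ) : Psi q 3 = q 3 := rfl

theorem differentiable_Psi : Differentiable ℝ Psi :=
  differentiable_pi.2 fun i => by fin_cases i <;> simp [Psi] <;> fun_prop

theorem fderiv_Psi_apply (p v : Fin 4 → ℝ) :
    fderiv ℝ Psi p v = ![v 0, v 1 + p 3 * v 0 + p 0 * v 3,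
      v 2 + p 3 ^ 2 * v 0 + 2 * p 3 * p 0 * v 3, v 3] := by
  ext i
  rw [fderiv_pi fun i => differentiable_pi.1 differentiable_Psi i p]
  fin_cases i <;>
    simp (disch := fun_prop) [Psi, fderiv_fun_add, fderiv_fun_mul, fderiv_fun_pow, fderiv_apply] <;>
    ring

/-- For `w = DΨ_p(v)` one has `w₂ − p₄ w₁ = v₂ + p₁ v₄` and
`w₃ − p₄² w₁ = v₃ + 2 p₄ p₁ v₄`, i.e. `Ψ*(dy − t dx) = dy + x dt` and
`Ψ*(dz − t² dx) = dz + 2tx dt`.  Consequently `DΨ_p(v) ∈ D_lor(Ψ(p))` iff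
`v₂ + p₁ v₄ = 0` and `v₃ − 2 p₄ v₂ = 0`: `Ψ` pulls `D_lor` back to
`ker(dy + x dt) ∩ ker(dz − 2t dy)`, a Cartan-prolongation-type model. -/
theorem stmt_12 (p v : Fin 4 → ℝ) :
    fderiv ℝ Psi p v 1 - p 3 * fderiv ℝ Psi p v 0 = v 1 + p 0 * v 3 ∧
    fderiv ℝ Psi p v 2 - p 3 ^ 2 * fderiv ℝ Psi p v 0 = v 2 + 2 * p 3 * p 0 * v 3 ∧
    (fderiv ℝ Psi p v ∈ Dlor (Psi p) ↔ v 1 + p 0 * v 3 = 0 ∧ v 2 - 2 * p 3 * v 1 = 0) := by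
  have pullback_dy : fderiv ℝ Psi p v 1 - p 3 * fderiv ℝ Psi p v 0 = v 1 + p 0 * v 3 := by
    simp [fderiv_Psi_apply]; ring
  have pullback_dz :
      fderiv ℝ Psi p v 2 - p 3 ^ 2 * fderiv ℝ Psi p v 0 = v 2 + 2 * p 3 * p 0 * v 3 := by
    simp [fderiv_Psi_apply]; ring
  refine ⟨pullback_dy, pullback_dz, ?_⟩
  rw [mem_Dlor_iff, Psi_apply_three, pullback_dy, pullback_dz]
  constructor
  · rintro ⟨hy, hz⟩
    exact ⟨hy, by linear_combination hz - 2 * p 3 * hy⟩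
  · rintro ⟨hy, hz⟩
    exact ⟨hy, by linear_combination hz + 2 * p 3 * hy⟩
end

section
/- For α ∈ ℝ, define ψ : ℝ³ → ℝ³ by ψ(x,y,z) = (cos α·x + sin α·z, y − sin²α·zx + (1/2)cos α sin α·(z² − x²), cos α·z − sin α·x). Then for every p ∈ ℝ³ and v ∈ ℝ³, writing w = Dψ_p(v), one has w₂ − (ψ(p))₃·w₁ = v₂ − p₃·v₁; that is, ψ*(dy − z dx) = dy − z dx, so ψ is a strict contactomorphism of the standard contact structure ker(dy − z dx) lifting the rotation of the (x,z)-plane by angle −α. -/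
/-!
The rotation `(x, z) ↦ (cos α x + sin α z, cos α z − sin α x)` preserves area, so
`ψ_z dψ_x − z dx` is a closed, hence exact, 1-form on the `(x, z)`-plane; the correction term
`−sin²α zx + ½ cos α sin α (z² − x²)` in the `y`-component of `ψ` is a primitive of it, which
is exactly what makes `dψ_y − ψ_z dψ_x = dy − z dx`. Concretely, once `Dψ` is computed the
identity is `sin²α + cos²α = 1`.
-/

open Real

/-- The contactomorphism `ψ : ℝ³ → ℝ³`, the lift of the rotation of the `(x,z)`-plane
by angle `−α` to the standard contact structure `ker(dy − z dx)`. -/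
noncomputable def psi (α : ℝ) (p : Fin 3 → ℝ) : Fin 3 → ℝ :=
  ![cos α * p 0 + sin α * p 2,
    p 1 - sin α ^ 2 * (p 2 * p 0) + (1 / 2) * cos α * sin α * (p 2 ^ 2 - p 0 ^ 2),
    cos α * p 2 - sin α * p 0]

theorem fderiv_apply_apply {𝕜 ι : Type*} [NontriviallyNormedField 𝕜] [Fintype ι] (i : ι)
    (p v : ι → 𝕜) : fderiv 𝕜 (fun q : ι → 𝕜 => q i) p v = v i := by
  simp [(hasFDerivAt_apply i p).fderiv]

theorem differentiable_psi (α : ℝ) : Differentiable ℝ (psi α) :=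
  differentiable_pi.2 fun i => by fin_cases i <;> simp [psi] <;> fun_prop

theorem fderiv_psi_apply (α : ℝ) (p v : Fin 3 → ℝ) :
    fderiv ℝ (psi α) p v =
      ![cos α * v 0 + sin α * v 2,
        v 1 - sin α ^ 2 * (p 2 * v 0 + p 0 * v 2) + cos α * sin α * (p 2 * v 2 - p 0 * v 0),
        cos α * v 2 - sin α * v 0] := by
  ext i
  rw [← ContinuousLinearMap.proj_apply (R := ℝ) i (fderiv ℝ (psi α) p v),
    ← ContinuousLinearMap.comp_apply, ← fderiv_apply (differentiable_psi α p)]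
  fin_cases i <;> simp (disch := fun_prop) [psi, fderiv_fun_add, fderiv_fun_sub,
    fderiv_const_mul, fderiv_fun_mul, fderiv_fun_pow, fderiv_apply_apply]
  ring

/-- For every `p, v ∈ ℝ³`, writing `w = Dψ_p(v)`, one has
`w₂ − (ψ(p))₃ w₁ = v₂ − p₃ v₁`; that is, `ψ*(dy − z dx) = dy − z dx`, so `ψ` is a
strict contactomorphism of the standard contact structure lifting the rotation of the
`(x,z)`-plane by angle `−α`. -/
theorem stmt_15 (α : ℝ) (p v : Fin 3 → ℝ) :
    fderiv ℝ (psi α) p v 1 - psi α p 2 * fderiv ℝ (psi α) p v 0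
      = v 1 - p 2 * v 0 := by
  simp only [fderiv_psi_apply, psi, Matrix.cons_val_zero, Matrix.cons_val_one,
    Matrix.cons_val_two, Matrix.tail_cons, Matrix.head_cons]
  linear_combination -(p 2 * v 0) * sin_sq_add_cos_sq α
end
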